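/- arXiv:2006.09802 — 4 statements merged into one kernel-verified Lean document; each statement's English description precedes it below -/
import Mathlib

section
/- Let U = {u⁽¹⁾, …, u⁽ᵐ⁾} ⊆ ℤ^d be finite and non-empty, and define ū ∈ ℤ^d by ū_i = max_j u⁽ʲ⁾_i. Fix a line L = {c + t·v : t ∈ ℝ} ∩ ℕ^d in ℕ^d through a point c and direction v ∈ ℤ^d \ {0}, with c ≥ ū componentwise. Then the intersection of L with the upward closure of U, {x ∈ ℕ^d : ∃ j, x ≥ u⁽ʲ⁾}, is non-empty and is an interval of the line: if x, z are in the intersection and y ∈ L lies between x and z (i.e., y = x + s·v, z = x + t·v with 0 ≤ s ≤ t), then y is in the intersection. -/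
/-!
Write `y = c + r • v`. If `r ≥ 0`, every coordinate of `y` dominates either the corresponding
coordinate of `c` (where `v i ≥ 0`) or that of `z = y + (t - s) • v` (where `v i < 0`), so any
`u ∈ U` below `z` is below `y`, since `u ≤ c`. If `r ≤ 0`, the same argument with `x = y - s • v`
in place of `z` applies.
-/

theorem le_of_opposite_steps {R : Type*} [CommRing R] [LinearOrder R] [IsStrictOrderedRing R]
    {u a b p q v y : R} (ha : u ≤ a) (hb : u ≤ b) (hpq : p * q ≤ 0)
    (hya : y = a + p * v) (hyb : y = b + q * v) : u ≤ y := by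
  rcases le_or_gt 0 (p * v) with hpv | hpv
  · linarith
  · have hqv : 0 ≤ q * v := by
      by_contra! hqv
      have hprod : 0 < (p * v) * (q * v) := mul_pos_of_neg_of_neg hpv hqv
      nlinarith [mul_nonpos_of_nonpos_of_nonneg hpq (sq_nonneg v)]
    linarith

theorem line_inter_upward_closure_is_interval_general (d : ℕ) (U : Finset (Fin d → ℤ))
    (hU : U.Nonempty) (c : Fin d → ℕ) (v : Fin d → ℤ)
    (hc : ∀ u ∈ U, ∀ i, u i ≤ (c i : ℤ)) :
    (({x : Fin d → ℕ | ∃ t : ℝ, ∀ i, (x i : ℝ) = (c i : ℝ) + t * (v i : ℝ)} ∩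
        {x : Fin d → ℕ | ∃ u ∈ U, ∀ i, u i ≤ (x i : ℤ)}).Nonempty) ∧
    (∀ x ∈ {x : Fin d → ℕ | ∃ t : ℝ, ∀ i, (x i : ℝ) = (c i : ℝ) + t * (v i : ℝ)} ∩
        {x : Fin d → ℕ | ∃ u ∈ U, ∀ i, u i ≤ (x i : ℤ)},
     ∀ z ∈ {x : Fin d → ℕ | ∃ t : ℝ, ∀ i, (x i : ℝ) = (c i : ℝ) + t * (v i : ℝ)} ∩
        {x : Fin d → ℕ | ∃ u ∈ U, ∀ i, u i ≤ (x i : ℤ)},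
     ∀ y ∈ {x : Fin d → ℕ | ∃ t : ℝ, ∀ i, (x i : ℝ) = (c i : ℝ) + t * (v i : ℝ)},
     ∀ s t : ℝ, 0 ≤ s → s ≤ t →
       (∀ i, (y i : ℝ) = (x i : ℝ) + s * (v i : ℝ)) →
       (∀ i, (z i : ℝ) = (x i : ℝ) + t * (v i : ℝ)) →
       y ∈ {x : Fin d → ℕ | ∃ u ∈ U, ∀ i, u i ≤ (x i : ℤ)}) := by
  obtain ⟨u₀, hu₀⟩ := hU
  refine ⟨⟨c, ⟨0, fun i => by simp⟩, u₀, hu₀, hc u₀ hu₀⟩, ?_⟩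
  rintro x ⟨-, ux, hux, hxu⟩ z ⟨-, uz, huz, hzu⟩ y ⟨r, hyc⟩ s t hs hst hyx hyz
  have below_y : ∀ u ∈ U, ∀ (w : Fin d → ℕ) (q : ℝ), (∀ i, u i ≤ (w i : ℤ)) → r * q ≤ 0 →
      (∀ i, (y i : ℝ) = w i + q * v i) → ∃ u ∈ U, ∀ i, u i ≤ (y i : ℤ) :=
    fun u hu w q hw hrq hyw => ⟨u, hu, fun i => by
      exact_mod_cast le_of_opposite_steps (u := (u i : ℝ)) (by exact_mod_cast hc u hu i)
        (by exact_mod_cast hw i) hrq (hyc i) (hyw i)⟩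
  rcases le_total 0 r with hr | hr
  · exact below_y uz huz z (s - t) hzu (mul_nonpos_of_nonneg_of_nonpos hr (by linarith))
      fun i => by linarith [hyx i, hyz i]
  · exact below_y ux hux x s hxu (mul_nonpos_of_nonpos_of_nonneg hr hs) hyx

theorem line_inter_upward_closure_is_interval (d : ℕ) (U : Finset (Fin d → ℤ))
    (hU : U.Nonempty) (c : Fin d → ℕ) (v : Fin d → ℤ) (hv : v ≠ 0)
    (hc : ∀ u ∈ U, ∀ i, u i ≤ (c i : ℤ)) :
    (({x : Fin d → ℕ | ∃ t : ℝ, ∀ i, (x i : ℝ) = (c i : ℝ) + t * (v i : ℝ)} ∩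
        {x : Fin d → ℕ | ∃ u ∈ U, ∀ i, u i ≤ (x i : ℤ)}).Nonempty) ∧
    (∀ x ∈ {x : Fin d → ℕ | ∃ t : ℝ, ∀ i, (x i : ℝ) = (c i : ℝ) + t * (v i : ℝ)} ∩
        {x : Fin d → ℕ | ∃ u ∈ U, ∀ i, u i ≤ (x i : ℤ)},
     ∀ z ∈ {x : Fin d → ℕ | ∃ t : ℝ, ∀ i, (x i : ℝ) = (c i : ℝ) + t * (v i : ℝ)} ∩
        {x : Fin d → ℕ | ∃ u ∈ U, ∀ i, u i ≤ (x i : ℤ)},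
     ∀ y ∈ {x : Fin d → ℕ | ∃ t : ℝ, ∀ i, (x i : ℝ) = (c i : ℝ) + t * (v i : ℝ)},
     ∀ s t : ℝ, 0 ≤ s → s ≤ t →
       (∀ i, (y i : ℝ) = (x i : ℝ) + s * (v i : ℝ)) →
       (∀ i, (z i : ℝ) = (x i : ℝ) + t * (v i : ℝ)) →
       y ∈ {x : Fin d → ℕ | ∃ u ∈ U, ∀ i, u i ≤ (x i : ℤ)}) :=
  line_inter_upward_closure_is_interval_general d U hU c v hc
end

section
/- Let d = 2 and suppose the input set ℐ ⊆ ℕ² and output set 𝒪 ⊆ ℕ² are finite and non-empty. Then the set 𝒪̄ \ ℐ̄ is finite if and only if min{x₁ : x ∈ 𝒪} ≥ min{y₁ : y ∈ ℐ} and min{x₂ : x ∈ 𝒪} ≥ min{y₂ : y ∈ ℐ}. -/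
/-!
If some `x ∈ 𝒪` has `xⱼ` below every `yⱼ`, `y ∈ ℐ`, then moving `x` up along the other axis
stays in `𝒪̄` and never enters `ℐ̄`, giving infinitely many trapped points. Conversely, let `M`
bound `ℐ`; a point `x ∈ 𝒪̄` with `xᵢ > Mᵢ` is dominated in the other coordinate `j` by some
`y ∈ ℐ` (as `min 𝒪ⱼ ≥ min ℐⱼ`) and in coordinate `i` by every `y ∈ ℐ`, so `x ∈ ℐ̄`. In dimension
two this leaves only the points of the box `[0, M]`.
-/

open Finset

theorem Finset.min'_image_le_min'_image_iff {α β : Type*} [LinearOrder β] [DecidableEq β] {s t : Finset α}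
    (f : α → β) (hs : s.Nonempty) (ht : t.Nonempty) :
    (s.image f).min' (hs.image f) ≤ (t.image f).min' (ht.image f) ↔
      ∀ x ∈ t, ∃ y ∈ s, f y ≤ f x := by
  rw [le_min'_iff, forall_mem_image]
  refine forall₂_congr fun x _ => ⟨fun hx => ?_, fun ⟨y, hy, hyx⟩ => ?_⟩
  · obtain ⟨y, hy, hy_eq⟩ := mem_image.1 ((s.image f).min'_mem (hs.image f))
    exact ⟨y, hy, hy_eq ▸ hx⟩
  · exact (min'_le _ _ (mem_image_of_mem f hy)).trans hyx

section UpperClosure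

variable {ι α : Type*}

theorem infinite_upperClosure_diff_upperClosure [Nontrivial ι] [DecidableEq ι] [Preorder α]
    [NoMaxOrder α] {O I : Set (ι → α)} {x : ι → α} (hx : x ∈ O) (j : ι)
    (hxI : ∀ y ∈ I, ¬y j ≤ x j) :
    ((upperClosure O : Set (ι → α)) \ upperClosure I).Infinite := by
  obtain ⟨k, hkj⟩ := exists_ne j
  refine ((Set.Ici_infinite (x k)).image (Function.update_injective x k).injOn).mono ?_
  rintro _ ⟨a, hxa, rfl⟩
  refine ⟨mem_upperClosure.2 ⟨x, hx, ?_⟩, fun h => ?_⟩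
  · simpa [le_update_iff] using hxa
  · obtain ⟨y, hy, hya⟩ := mem_upperClosure.1 h
    exact hxI y hy (by simpa [Function.update_of_ne hkj.symm] using hya j)

theorem le_of_mem_upperClosure_of_notMem_upperClosure [LinearOrder α] {O I : Set (Fin 2 → α)}
    {M x : Fin 2 → α} (hM : M ∈ upperBounds I) (hOI : ∀ j, ∀ z ∈ O, ∃ y ∈ I, y j ≤ z j)
    (hxO : x ∈ upperClosure O) (hxI : x ∉ upperClosure I) : x ≤ M := by
  intro i
  by_contra! hi
  obtain ⟨j, hji⟩ := exists_ne i
  obtain ⟨z, hz, hzx⟩ := mem_upperClosure.1 hxO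
  obtain ⟨y, hy, hyz⟩ := hOI j z hz
  refine hxI (mem_upperClosure.2 ⟨y, hy, fun k => ?_⟩)
  rcases eq_or_ne k i with rfl | hki
  · exact (hM hy k).trans hi.le
  · obtain rfl : k = j := by omega
    exact hyz.trans (hzx k)

theorem finite_upperClosure_diff_upperClosure {O I : Set (Fin 2 → ℕ)} (hI : I.Finite)
    (hOI : ∀ j, ∀ z ∈ O, ∃ y ∈ I, y j ≤ z j) :
    ((upperClosure O : Set (Fin 2 → ℕ)) \ upperClosure I).Finite := by
  obtain ⟨M, hM⟩ := hI.bddAbove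
  exact (Set.finite_Iic M).subset fun x hx =>
    le_of_mem_upperClosure_of_notMem_upperClosure hM hOI hx.1 hx.2

end UpperClosure

theorem trapping_finite_iff_min_d2 (I O : Finset (Fin 2 → ℕ))
    (hI : I.Nonempty) (hO : O.Nonempty) :
    ({x : Fin 2 → ℕ | ∃ y ∈ O, y ≤ x} \ {x : Fin 2 → ℕ | ∃ y ∈ I, y ≤ x}).Finite ↔
      ∀ j : Fin 2,
        (I.image fun y => y j).min' (hI.image _) ≤
          (O.image fun x => x j).min' (hO.image _) := by
  have hcl (S : Finset (Fin 2 → ℕ)) :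
      {x | ∃ y ∈ S, y ≤ x} = (upperClosure (S : Set (Fin 2 → ℕ)) : Set (Fin 2 → ℕ)) := by
    ext; simp [mem_upperClosure]
  simp only [hcl]
  refine ⟨fun hfin j => (min'_image_le_min'_image_iff _ hI hO).2 fun x hx => ?_,
    fun h => finite_upperClosure_diff_upperClosure I.finite_toSet fun j =>
      (min'_image_le_min'_image_iff _ hI hO).1 (h j)⟩
  by_contra! hxI
  exact infinite_upperClosure_diff_upperClosure hx j (fun y hy => (hxI y hy).not_ge) hfin
end

section
/- Let ℐ, 𝒪 be finite non-empty subsets of ℕ^d. Then 𝒪̄ \ ℐ̄ is finite if and only if for every j ∈ {1,…,d} and every x ∈ 𝒪 there exists y ∈ ℐ such that x_k ≥ y_k for all k ≠ j. -/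
/-!
A point of the upper closure of `O` that stays below the upper closure of `I` can only escape to
infinity along a single coordinate `j`, i.e. along a ray `x + n • eⱼ` with `x ∈ O`. Such a ray
eventually enters the upper closure of `I` exactly when some `y ∈ I` lies below `x` in all
coordinates other than `j`. Conversely, if this holds for every `j`, the difference of the two
closures lies in the box bounded by the coordinatewise maxima of `I`.
-/

open Function Set

variable {ι : Type*}

section Ray

variable [DecidableEq ι]

lemma injective_update_add (x : ι → ℕ) (j : ι) : Injective fun n : ℕ => update x j (x j + n) :=
  fun a b hab => by simpa using congrFun hab j

lemma le_update_add (x : ι → ℕ) (j : ι) (n : ℕ) : x ≤ update x j (x j + n) := by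
  intro k
  rcases eq_or_ne k j with rfl | hk <;> simp [*]

lemma update_add_notMem_upperClosure {I : Set (ι → ℕ)} {x : ι → ℕ} {j : ι}
    (h : ∀ y ∈ I, ∃ k ≠ j, x k < y k) (n : ℕ) : update x j (x j + n) ∉ upperClosure I := by
  rintro ⟨y, hy, hle⟩
  obtain ⟨k, hk, hlt⟩ := h y hy
  exact (hle k).not_gt (by rwa [update_of_ne hk])

lemma infinite_upperClosure_sdiff {I O : Set (ι → ℕ)} {x : ι → ℕ} (hx : x ∈ O) {j : ι}
    (h : ∀ y ∈ I, ∃ k ≠ j, x k < y k) :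
    ((upperClosure O : Set (ι → ℕ)) \ upperClosure I).Infinite :=
  infinite_of_injective_forall_mem (injective_update_add x j)
    fun n => ⟨⟨x, hx, le_update_add x j n⟩, update_add_notMem_upperClosure h n⟩

end Ray

lemma upperClosure_sdiff_subset_Iic {I : Finset (ι → ℕ)} {O : Set (ι → ℕ)}
    (h : ∀ j, ∀ x ∈ O, ∃ y ∈ I, ∀ k ≠ j, y k ≤ x k) :
    (upperClosure O : Set (ι → ℕ)) \ upperClosure (I : Set (ι → ℕ)) ⊆
      Iic fun j => I.sup (· j) := by
  rintro z ⟨⟨x, hx, hxz⟩, hz⟩ j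
  obtain ⟨y, hy, hyx⟩ := h j x hx
  by_contra! hzj
  -- `z j` exceeds the `j`-th coordinate of every element of `I`, so `y ≤ z`.
  refine hz ⟨y, hy, fun k => ?_⟩
  rcases eq_or_ne k j with rfl | hk
  · exact (Finset.le_sup (f := (· k)) hy).trans hzj.le
  · exact (hyx k hk).trans (hxz k)

theorem finite_upperClosure_sdiff_iff [Fintype ι] [DecidableEq ι] (I : Finset (ι → ℕ))
    (O : Set (ι → ℕ)) :
    ((upperClosure O : Set (ι → ℕ)) \ upperClosure (I : Set (ι → ℕ))).Finite ↔
      ∀ j, ∀ x ∈ O, ∃ y ∈ I, ∀ k ≠ j, y k ≤ x k := by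
  refine ⟨fun hfin j x hx => ?_, fun h => (finite_Iic _).subset (upperClosure_sdiff_subset_Iic h)⟩
  by_contra! h
  exact infinite_upperClosure_sdiff hx h hfin

theorem trapping_finite_iff_projection_general (d : ℕ) (I O : Finset (Fin d → ℕ)) :
    ({x : Fin d → ℕ | ∃ y ∈ O, y ≤ x} \ {x : Fin d → ℕ | ∃ y ∈ I, y ≤ x}).Finite ↔
      ∀ j : Fin d, ∀ x ∈ O, ∃ y ∈ I, ∀ k, k ≠ j → y k ≤ x k :=
  finite_upperClosure_sdiff_iff I O

theorem trapping_finite_iff_projection (d : ℕ) (I O : Finset (Fin d → ℕ))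
    (hI : I.Nonempty) (hO : O.Nonempty) :
    ({x : Fin d → ℕ | ∃ y ∈ O, y ≤ x} \ {x : Fin d → ℕ | ∃ y ∈ I, y ≤ x}).Finite ↔
      ∀ j : Fin d, ∀ x ∈ O, ∃ y ∈ I, ∀ k, k ≠ j → y k ≤ x k :=
  trapping_finite_iff_projection_general d I O
end

section
/- Let Q and Q̃ be Markov jump structures on ℕ^d with jump sets 𝒯̃ ⊆ 𝒯 and upward-closed activity sets ℐ̄_ω (for Q) and 𝒥̄_ω (for Q̃). Assume (i) 𝒥̄_ω = ℐ̄_ω for all ω ∈ 𝒯̃, and (ii) for every ω ∈ 𝒯 \ 𝒯̃ there is ω̃ ∈ 𝒯̃ and k ∈ ℕ, k ≥ 1, with ω = k • ω̃, such that x ∈ ℐ̄_ω implies x + j • ω̃ ∈ ℐ̄_ω̃ for all j = 0, …, k−1. Then the reachability relations of Q and Q̃ coincide: for all x, y ∈ ℕ^d, x ⇀* y in Q iff x ⇀* y in Q̃. -/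
/-!
A jump `ω = k • ω̃` of `Q` can be simulated in `Q̃` by `k` successive jumps `ω̃`: hypothesis (ii)
says precisely that every intermediate state `x + j • ω̃`, `j < k`, is a point of `ℕ^d` at which
`ω̃` is active. Conversely, every jump of `Q̃` is a jump of `Q` by (i) and `𝒯̃ ⊆ 𝒯`.
-/

namespace MarkovJump

variable {ι : Type*}

/-- The one-step relation `⇀` of the jump structure with jump set `T` and activity sets `I`. -/
def JumpStep (T : Set (ι → ℤ)) (I : (ι → ℤ) → Set (ι → ℕ)) (a b : ι → ℕ) : Prop :=
  ∃ ω ∈ T, a ∈ I ω ∧ ∀ i, (b i : ℤ) = (a i : ℤ) + ω i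

theorem jumpStep_mono {T T' : Set (ι → ℤ)} {I I' : (ι → ℤ) → Set (ι → ℕ)} (hT : T ⊆ T')
    (hI : ∀ ω ∈ T, I ω ⊆ I' ω) : JumpStep T I ≤ JumpStep T' I' :=
  fun _ _ ⟨ω, hω, ha, hb⟩ ↦ ⟨ω, hT hω, hI ω hω ha, hb⟩

theorem reflTransGen_jumpStep_of_forall_lt {T : Set (ι → ℤ)} {I : (ι → ℤ) → Set (ι → ℕ)}
    {ω : ι → ℤ} (hω : ω ∈ T) {x : ι → ℕ} {k : ℕ}
    (hpath : ∀ j < k, ∃ z ∈ I ω, ∀ i, (z i : ℤ) = (x i : ℤ) + (j • ω) i)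
    {y : ι → ℕ} (hy : ∀ i, (y i : ℤ) = (x i : ℤ) + (k • ω) i) :
    Relation.ReflTransGen (JumpStep T I) x y := by
  induction k generalizing y with
  | zero =>
    obtain rfl : y = x := funext fun i ↦ by simpa using hy i
    exact .refl
  | succ k ih =>
    obtain ⟨z, hzI, hz⟩ := hpath k (Nat.lt_succ_self k)
    refine (ih (fun j hj ↦ hpath j (Nat.lt_succ_of_lt hj)) hz).tail ⟨ω, hω, hzI, fun i ↦ ?_⟩
    simp only [hy i, hz i, Pi.smul_apply, nsmul_eq_mul, Nat.cast_succ]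
    ring

end MarkovJump

open MarkovJump in
theorem structural_equivalence_general (d : ℕ)
    (T Tt : Set (Fin d → ℤ)) (hsub : Tt ⊆ T)
    (I J : (Fin d → ℤ) → Set (Fin d → ℕ))
    (hi : ∀ ω ∈ Tt, J ω = I ω)
    (hii : ∀ ω ∈ T \ Tt, ∃ ωt ∈ Tt, ∃ k : ℕ, 1 ≤ k ∧ ω = k • ωt ∧
      ∀ x ∈ I ω, ∀ j : ℕ, j < k →
        ∃ z : Fin d → ℕ, (∀ i, (z i : ℤ) = (x i : ℤ) + (j • ωt) i) ∧ z ∈ I ωt) :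
    ∀ x y : Fin d → ℕ,
      Relation.ReflTransGen
        (fun a b => ∃ ω ∈ T, a ∈ I ω ∧ ∀ i, (b i : ℤ) = (a i : ℤ) + ω i) x y ↔
      Relation.ReflTransGen
        (fun a b => ∃ ω ∈ Tt, a ∈ J ω ∧ ∀ i, (b i : ℤ) = (a i : ℤ) + ω i) x y := by
  have simulate : JumpStep T I ≤ Relation.ReflTransGen (JumpStep Tt J) := by
    rintro a b ⟨ω, hωT, haI, hb⟩
    by_cases hωt : ω ∈ Tt
    · exact .single ⟨ω, hωt, (hi ω hωt).symm ▸ haI, hb⟩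
    obtain ⟨ωt, hωtTt, k, -, rfl, hpath⟩ := hii ω ⟨hωT, hωt⟩
    refine reflTransGen_jumpStep_of_forall_lt hωtTt (fun j hj ↦ ?_) hb
    obtain ⟨z, hz, hzI⟩ := hpath a haI j hj
    exact ⟨z, (hi ωt hωtTt).symm ▸ hzI, hz⟩
  have embed : JumpStep Tt J ≤ JumpStep T I :=
    jumpStep_mono hsub fun ω hω ↦ (hi ω hω).le
  exact fun x y ↦ ⟨fun h ↦ Relation.reflTransGen_closed simulate x y h,
    fun h ↦ Relation.ReflTransGen.mono embed x y h⟩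

theorem structural_equivalence (d : ℕ)
    (T Tt : Set (Fin d → ℤ)) (hsub : Tt ⊆ T)
    (I J : (Fin d → ℤ) → Set (Fin d → ℕ))
    (hup : ∀ ω ∈ T, ∀ x y : Fin d → ℕ, x ≤ y → x ∈ I ω → y ∈ I ω)
    (hi : ∀ ω ∈ Tt, J ω = I ω)
    (hii : ∀ ω ∈ T \ Tt, ∃ ωt ∈ Tt, ∃ k : ℕ, 1 ≤ k ∧ ω = k • ωt ∧
      ∀ x ∈ I ω, ∀ j : ℕ, j < k →
        ∃ z : Fin d → ℕ, (∀ i, (z i : ℤ) = (x i : ℤ) + (j • ωt) i) ∧ z ∈ I ωt) :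
    ∀ x y : Fin d → ℕ,
      Relation.ReflTransGen
        (fun a b => ∃ ω ∈ T, a ∈ I ω ∧ ∀ i, (b i : ℤ) = (a i : ℤ) + ω i) x y ↔
      Relation.ReflTransGen
        (fun a b => ∃ ω ∈ Tt, a ∈ J ω ∧ ∀ i, (b i : ℤ) = (a i : ℤ) + ω i) x y :=
  structural_equivalence_general d T Tt hsub I J hi hii
end
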